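/- arXiv:1210.6419 — 6 statements merged into one kernel-verified Lean document; each statement's English description precedes it below -/
import Mathlib

section
/- Let z₀ = x₀ + iy₀ be a complex (non-real, y₀ ≠ 0) root of z² − cz + α₀ + β₀e^{−chz} = 0 with c > 0, h > 0, β₀ > 0. If x₀ < λ where λ is a positive real root of the same equation with 2λ < c, then |y₀| > π/(ch). -/
open Real Complex

/-!
Taking imaginary parts in the characteristic equation gives
`(2x₀ − c) y₀ = β₀ e^{−chx₀} sin(ch y₀)`. Multiplying by `y₀`, the left side is negative because
`2x₀ < 2λ < c`, so `y₀ sin(ch y₀) < 0`, i.e. `sin(ch|y₀|) < 0`. As `sin ≥ 0` on `[0, π]`, this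
forces `ch|y₀| > π`.
-/

lemma im_characteristic (c h α β x y : ℝ) :
    ((x + y * I) ^ 2 - (c : ℂ) * (x + y * I) + (α : ℂ)
      + (β : ℂ) * Complex.exp (-(c * h : ℂ) * (x + y * I))).im
      = 2 * x * y - c * y - β * Real.exp (-(c * h * x)) * Real.sin (c * h * y) := by
  simp only [Complex.add_im, Complex.sub_im, Complex.mul_im, Complex.mul_re, Complex.exp_im,
    Complex.exp_re, pow_two, Complex.add_re, Complex.neg_re, Complex.neg_im, Complex.ofReal_re,
    Complex.ofReal_im, Complex.I_re, Complex.I_im]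
  simp only [mul_zero, zero_mul, sub_zero, add_zero, zero_add, mul_one, neg_mul, neg_zero,
    Real.sin_neg]
  ring

lemma abs_mul_sin_mul_abs (k y : ℝ) : |y| * Real.sin (k * |y|) = y * Real.sin (k * y) := by
  rcases abs_choice y with hy | hy <;> rw [hy]
  rw [mul_neg, Real.sin_neg, neg_mul_neg]

lemma pi_lt_of_sin_neg {t : ℝ} (ht : 0 ≤ t) (hsin : Real.sin t < 0) : π < t := by
  by_contra! hle
  exact hsin.not_ge (Real.sin_nonneg_of_nonneg_of_le_pi ht hle)

theorem stmt_3_general (c h α₀ β₀ lam x₀ y₀ : ℝ) (hc : 0 < c) (hh : 0 < h) (hβ : 0 < β₀)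
    (hy : y₀ ≠ 0)
    (hroot : (x₀ + y₀ * Complex.I) ^ 2 - (c : ℂ) * (x₀ + y₀ * Complex.I) + (α₀ : ℂ)
      + (β₀ : ℂ) * Complex.exp (-(c * h : ℂ) * (x₀ + y₀ * Complex.I)) = 0)
    (hlamc : 2 * lam < c) (hx : x₀ < lam) :
    |y₀| > Real.pi / (c * h) := by
  have hch : 0 < c * h := mul_pos hc hh
  have him := congrArg Complex.im hroot
  rw [im_characteristic, Complex.zero_im] at him
  have hysin : y₀ * Real.sin (c * h * y₀) < 0 := by
    have hneg : (2 * x₀ - c) * y₀ ^ 2 < 0 :=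
      mul_neg_of_neg_of_pos (by linarith) (sq_pos_of_ne_zero hy)
    have hpos : 0 < β₀ * Real.exp (-(c * h * x₀)) := mul_pos hβ (Real.exp_pos _)
    have hid : β₀ * Real.exp (-(c * h * x₀)) * (y₀ * Real.sin (c * h * y₀))
        = (2 * x₀ - c) * y₀ ^ 2 := by linear_combination (-y₀) * him
    exact neg_of_mul_neg_right (hid ▸ hneg) hpos.le
  have hsin : Real.sin (c * h * |y₀|) < 0 := by
    have := abs_mul_sin_mul_abs (c * h) y₀
    exact neg_of_mul_neg_right (this ▸ hysin) (abs_nonneg y₀)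
  have hpi : π < c * h * |y₀| := pi_lt_of_sin_neg (by positivity) hsin
  rw [gt_iff_lt, div_lt_iff₀ hch]
  linarith

/-- A non-real root `z₀ = x₀ + i y₀` of `z² − cz + α₀ + β₀ e^{−chz} = 0` whose real part
is below a positive real root `λ` (with `2λ < c`) must have `|y₀| > π/(ch)`. -/
theorem stmt_3 (c h α₀ β₀ lam x₀ y₀ : ℝ) (hc : 0 < c) (hh : 0 < h) (hβ : 0 < β₀)
    (hy : y₀ ≠ 0)
    (hroot : (x₀ + y₀ * Complex.I) ^ 2 - (c : ℂ) * (x₀ + y₀ * Complex.I) + (α₀ : ℂ)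
      + (β₀ : ℂ) * Complex.exp (-(c * h : ℂ) * (x₀ + y₀ * Complex.I)) = 0)
    (hlampos : 0 < lam) (hlam : lam ^ 2 - c * lam + α₀ + β₀ * Real.exp (-(c * h) * lam) = 0)
    (hlamc : 2 * lam < c) (hx : x₀ < lam) :
    |y₀| > Real.pi / (c * h) :=
  stmt_3_general c h α₀ β₀ lam x₀ y₀ hc hh hβ hy hroot hlamc hx
end

section
/- Suppose y : ℝ → ℝ is a positive, continuous function on [T₁ − r, ∞) (with r > 0), and there is ξ > 0 with ξ(e^{ρ r/2} − 1) > ρ for some ρ > 0, such that y(t) ≥ ξ ∫_{t − r/2}^{t} y(s) ds for all t ≥ T₁ − r. If y(s) > C e^{−ρ s} for all s ∈ [T₁ − r, T₁] with C > 0, then y(s) > C e^{−ρ s} for all s ≥ T₁ − r. In particular, y is not superexponentially small at +∞. -/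
open Real Set intervalIntegral

/-!
Compare `y` with the model solution `C e^{-ρt}`. The gap condition says exactly that the model
is a strict subsolution: `ξ ∫_{t-r/2}^t C e^{-ρs} ds = C e^{-ρt} ξ (e^{ρr/2} - 1) / ρ > C e^{-ρt}`.
Hence at the first time `t > T₁` where `y` could meet the model, `y ≥ C e^{-ρ·}` on the
window `[t - r/2, t]` and the integral inequality forces `y t > C e^{-ρt}`.
-/

theorem forall_lt_of_forall_Ico_lt {f g : ℝ → ℝ} {a : ℝ} (hf : ContinuousOn f (Ici a))
    (hg : ContinuousOn g (Ici a)) (step : ∀ t ∈ Ici a, (∀ s ∈ Ico a t, f s < g s) → f t < g t) :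
    ∀ t ∈ Ici a, f t < g t := by
  by_contra! hfail
  set S := {t ∈ Ici a | g t ≤ f t}
  have hS_bdd : BddBelow S := ⟨a, fun s hs => hs.1⟩
  have hS_mem : sInf S ∈ S := (isClosed_Ici.isClosed_le hg hf).csInf_mem hfail hS_bdd
  refine (step _ hS_mem.1 fun s hs => ?_).not_ge hS_mem.2
  exact not_le.mp fun hle => (notMem_of_lt_csInf hs.2 hS_bdd) ⟨hs.1, hle⟩

theorem integral_const_mul_exp_neg_mul (C ρ h t : ℝ) (hρ : ρ ≠ 0) :
    ∫ s in (t - h)..t, C * exp (-ρ * s) = C / ρ * exp (-ρ * t) * (exp (ρ * h) - 1) := by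
  rw [intervalIntegral.integral_const_mul, integral_comp_mul_left exp (neg_ne_zero.mpr hρ),
    integral_exp, smul_eq_mul, show -ρ * (t - h) = -ρ * t + ρ * h by ring, exp_add]
  field_simp
  ring

theorem const_mul_exp_neg_mul_lt_mul_integral {ρ ξ C h : ℝ} (hρ : 0 < ρ) (hC : 0 < C)
    (hgap : ξ * (exp (ρ * h) - 1) > ρ) (t : ℝ) :
    C * exp (-ρ * t) < ξ * ∫ s in (t - h)..t, C * exp (-ρ * s) := by
  rw [integral_const_mul_exp_neg_mul C ρ h t hρ.ne']
  have hmodel : 0 < C * exp (-ρ * t) / ρ := by positivity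
  calc C * exp (-ρ * t) = C * exp (-ρ * t) / ρ * ρ := by field_simp
    _ < C * exp (-ρ * t) / ρ * (ξ * (exp (ρ * h) - 1)) := by gcongr
    _ = _ := by ring

theorem stmt_4_general (r ρ ξ C T₁ : ℝ) (hr : 0 < r) (hρ : 0 < ρ) (hξ : 0 < ξ) (hC : 0 < C)
    (hgap : ξ * (Real.exp (ρ * r / 2) - 1) > ρ)
    (y : ℝ → ℝ) (hcont : ContinuousOn y (Ici (T₁ - r)))
    (hineq : ∀ t ∈ Ici (T₁ - r), y t ≥ ξ * ∫ s in (t - r / 2)..t, y s)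
    (hinit : ∀ s ∈ Icc (T₁ - r) T₁, y s > C * Real.exp (-ρ * s)) :
    ∀ s ∈ Ici (T₁ - r), y s > C * Real.exp (-ρ * s) := by
  have hmodel : ContinuousOn (fun s => C * exp (-ρ * s)) (Ici (T₁ - r)) := by fun_prop
  refine forall_lt_of_forall_Ico_lt hmodel hcont fun t ht hbefore => ?_
  rcases le_or_gt t T₁ with htT | htT
  · exact hinit t ⟨ht, htT⟩
  have hwindow : Icc (t - r / 2) t ⊆ Ici (T₁ - r) := fun s hs => by
    simp only [mem_Ici]; linarith [hs.1]
  have hmodel_le : ∫ s in (t - r / 2)..t, C * exp (-ρ * s) ≤ ∫ s in (t - r / 2)..t, y s :=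
    integral_mono_on_of_le_Ioo (by linarith) (Continuous.intervalIntegrable (by fun_prop) _ _)
      ((hcont.mono hwindow).intervalIntegrable_of_Icc (by linarith))
      fun s hs => (hbefore s ⟨hwindow (Ioo_subset_Icc_self hs), hs.2⟩).le
  calc C * exp (-ρ * t) < ξ * ∫ s in (t - r / 2)..t, C * exp (-ρ * s) :=
        const_mul_exp_neg_mul_lt_mul_integral hρ hC (by rwa [← mul_div_assoc]) t
    _ ≤ ξ * ∫ s in (t - r / 2)..t, y s := by gcongr
    _ ≤ y t := hineq t ht

/-- A positive continuous function satisfying `y t ≥ ξ ∫_{t−r/2}^t y` with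
`ξ (e^{ρr/2} − 1) > ρ` cannot decay faster than `C e^{−ρ t}` if it dominates it initially. -/
theorem stmt_4 (r ρ ξ C T₁ : ℝ) (hr : 0 < r) (hρ : 0 < ρ) (hξ : 0 < ξ) (hC : 0 < C)
    (hgap : ξ * (Real.exp (ρ * r / 2) - 1) > ρ)
    (y : ℝ → ℝ) (hcont : ContinuousOn y (Ici (T₁ - r)))
    (hpos : ∀ t ∈ Ici (T₁ - r), 0 < y t)
    (hineq : ∀ t ∈ Ici (T₁ - r), y t ≥ ξ * ∫ s in (t - r / 2)..t, y s)
    (hinit : ∀ s ∈ Icc (T₁ - r) T₁, y s > C * Real.exp (-ρ * s)) :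
    ∀ s ∈ Ici (T₁ - r), y s > C * Real.exp (-ρ * s) :=
  stmt_4_general r ρ ξ C T₁ hr hρ hξ hC hgap y hcont hineq hinit
end

section
/- Let φ : ℝ → (0, κ) be a C² solution of φ''(t) − cφ'(t) + f(φ(t), φ(t − τ)) = 0 where c > 0, τ ≥ 0, f is continuous and f(x, y) > 0 for all x, y ∈ (0, κ), and φ(−∞) = 0, φ(+∞) = κ. Then φ'(t) > 0 for all t ∈ ℝ. -/
open Real Set Filter Topology

/-!
At a zero of `φ'` the equation gives `φ'' = -f(φ, φ(· - τ)) < 0`, so `φ'` can only cross zero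
downwards. Hence once `φ'(t) ≤ 0`, it stays nonpositive on `[t, ∞)`, and `φ` is nonincreasing
there; since `φ < κ`, this is incompatible with `φ(+∞) = κ`.
-/

lemma nonpos_on_Ici_of_deriv_neg_at_zeros {g : ℝ → ℝ} (hg : Continuous g)
    (hzero : ∀ t, g t = 0 → deriv g t < 0) {a : ℝ} (ha : g a ≤ 0) :
    ∀ t ∈ Ici a, g t ≤ 0 := by
  intro t ht
  refine IsClosed.Icc_subset_of_forall_mem_nhdsWithin (b := t)
    ((isClosed_le hg continuous_const).inter isClosed_Icc) ha ?_ ⟨ht, le_rfl⟩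
  rintro x ⟨hx, -⟩
  rcases (show g x ≤ 0 from hx).lt_or_eq with hneg | hzero_x
  · exact mem_nhdsWithin_of_mem_nhds <|
      (hg.continuousAt.eventually (gt_mem_nhds hneg)).mono fun _ h ↦ le_of_lt h
  · filter_upwards [nhdsWithin_le_nhds
      (eventually_nhdsWithin_sign_eq_of_deriv_neg (hzero x hzero_x) hzero_x),
      self_mem_nhdsWithin] with y hy (hxy : x < y)
    rw [sign_neg (sub_neg.mpr hxy), sign_eq_neg_one_iff] at hy
    exact hy.le

lemma not_antitoneOn_Ici_of_tendsto_atTop {α β : Type*} [Preorder α] [IsDirectedOrder α]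
    [Nonempty α] [LinearOrder β] [TopologicalSpace β] [OrderClosedTopology β] {φ : α → β} {κ : β}
    (hlt : ∀ t, φ t < κ) (hlim : Tendsto φ atTop (𝓝 κ)) (a : α) : ¬ AntitoneOn φ (Ici a) := by
  intro hanti
  have : κ ≤ φ a := le_of_tendsto hlim <| (eventually_ge_atTop a).mono fun t ht ↦
    hanti le_rfl ht ht
  exact (hlt a).not_ge this

theorem stmt_5_general (κ c τ : ℝ)
    (f : ℝ → ℝ → ℝ)
    (hfpos : ∀ x ∈ Ioo 0 κ, ∀ y ∈ Ioo 0 κ, 0 < f x y)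
    (φ : ℝ → ℝ) (hsm : ContDiff ℝ 2 φ)
    (hrange : ∀ t, φ t ∈ Ioo 0 κ)
    (heq : ∀ t, deriv (deriv φ) t - c * deriv φ t + f (φ t) (φ (t - τ)) = 0)
    (hplus : Tendsto φ atTop (nhds κ)) :
    ∀ t, 0 < deriv φ t := by
  intro t
  by_contra! ht
  have hφ' : Continuous (deriv φ) := hsm.continuous_deriv (by norm_num)
  have hzero : ∀ s, deriv φ s = 0 → deriv (deriv φ) s < 0 := fun s hs ↦ by
    have := heq s
    rw [hs, mul_zero] at this
    linarith [hfpos _ (hrange s) _ (hrange (s - τ))]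
  have hanti : AntitoneOn φ (Ici t) :=
    antitoneOn_of_deriv_nonpos (convex_Ici t) hsm.continuous.continuousOn
      (hsm.differentiable (by norm_num)).differentiableOn fun s hs ↦
        nonpos_on_Ici_of_deriv_neg_at_zeros hφ' hzero ht s (interior_subset hs)
  exact not_antitoneOn_Ici_of_tendsto_atTop (fun s ↦ (hrange s).2) hplus t hanti

/-- A heteroclinic profile of `φ'' − cφ' + f(φ(t), φ(t−τ)) = 0` with positive
nonlinearity on `(0,κ)²` is strictly increasing. -/
theorem stmt_5 (κ c τ : ℝ) (hκ : 0 < κ) (hc : 0 < c) (hτ : 0 ≤ τ)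
    (f : ℝ → ℝ → ℝ) (hfc : Continuous fun p : ℝ × ℝ => f p.1 p.2)
    (hfpos : ∀ x ∈ Ioo 0 κ, ∀ y ∈ Ioo 0 κ, 0 < f x y)
    (φ : ℝ → ℝ) (hsm : ContDiff ℝ 2 φ)
    (hrange : ∀ t, φ t ∈ Ioo 0 κ)
    (heq : ∀ t, deriv (deriv φ) t - c * deriv φ t + f (φ t) (φ (t - τ)) = 0)
    (hminus : Tendsto φ atBot (nhds 0)) (hplus : Tendsto φ atTop (nhds κ)) :
    ∀ t, 0 < deriv φ t :=
  stmt_5_general κ c τ f hfpos φ hsm hrange heq hplus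
end

section
/- Under the representation of the previous context, every bounded solution φ with 0 ≤ φ(t) ≤ κ of φ'' − cφ' + f(φ(·), φ(·−r)) = 0 has derivative bounded by |φ'(t)| ≤ κ + max_{[0,κ]²}|f| for all t ∈ ℝ. -/
/-!
Write the equation as `φ'' - c φ' - φ = -(φ + g)` with `g t = f (φ t) (φ (t - r))`, so that the
forcing satisfies `|φ + g| ≤ κ + M`, and factor `D² - c D - 1 = (D - z₁)(D - z₂)` with
`z₁ < 0 < z₂`. Then `v = φ' - z₁ φ` solves `v' = z₂ v - (φ + g)` and `w = φ' - z₂ φ` solves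
`w' = z₁ w - (φ + g)`. If `z₂ |v|` exceeded `κ + M` somewhere, `v` would grow exponentially
forward in time and, since `φ' - v = z₁ φ` is bounded, `φ` would be unbounded; so
`z₂ |v| ≤ κ + M`, and likewise `|z₁| |w| ≤ κ + M` backward in time. Finally
`(z₂ - z₁) φ' = z₂ v - z₁ w` and `z₂ - z₁ = √(c² + 4) ≥ 2`.
-/

open Real Set Filter

theorem exp_mul_sub_mul_le_of_mul_le_deriv {a : ℝ} {u u' : ℝ → ℝ}
    (hu : ∀ t, HasDerivAt u (u' t) t) (hu' : ∀ t, a * u t ≤ u' t) {s t : ℝ} (hst : s ≤ t) :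
    exp (a * (t - s)) * u s ≤ u t := by
  have hq : ∀ x, HasDerivAt (fun x => exp (-a * x) * u x)
      (exp (-a * x) * (u' x - a * u x)) x := fun x =>
    ((((hasDerivAt_id' x).const_mul (-a)).exp).mul (hu x)).congr_deriv (by ring)
  have hmono : Monotone fun x => exp (-a * x) * u x :=
    monotone_of_deriv_nonneg (fun x => (hq x).differentiableAt) fun x => by
      rw [(hq x).deriv]
      exact mul_nonneg (exp_pos _).le (sub_nonneg.2 (hu' x))
  calc exp (a * (t - s)) * u s = exp (a * t) * (exp (-a * s) * u s) := by
        rw [← mul_assoc, ← exp_add]; ring_nf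
    _ ≤ exp (a * t) * (exp (-a * t) * u t) := mul_le_mul_of_nonneg_left (hmono hst) (exp_pos _).le
    _ = u t := by rw [← mul_assoc, ← exp_add]; simp

theorem tendsto_atTop_of_mul_le_deriv {a : ℝ} (ha : 0 < a) {u u' : ℝ → ℝ}
    (hu : ∀ t, HasDerivAt u (u' t) t) (hu' : ∀ t, a * u t ≤ u' t) {s : ℝ} (hs : 0 < u s) :
    Tendsto u atTop atTop := by
  have hexp : Tendsto (fun t => exp (a * (t - s)) * u s) atTop atTop :=
    (tendsto_exp_atTop.comp
      ((tendsto_atTop_add_const_right _ (-s) tendsto_id).const_mul_atTop ha)).atTop_mul_const hs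
  exact tendsto_atTop_mono' _ (eventually_ge_atTop s |>.mono fun t ht =>
    exp_mul_sub_mul_le_of_mul_le_deriv hu hu' ht) hexp

theorem not_bddAbove_range_of_tendsto_deriv_atTop {p p' : ℝ → ℝ}
    (hp : ∀ t, HasDerivAt p (p' t) t) (h : Tendsto p' atTop atTop) : ¬ BddAbove (range p) := by
  rintro ⟨K, hK⟩
  obtain ⟨T, hT⟩ := eventually_atTop.1 (h.eventually_ge_atTop 1)
  set t := T + 1 + |K - p T| with ht
  have hTt : T < t := by linarith [abs_nonneg (K - p T)]
  obtain ⟨ξ, hξ, hslope⟩ := exists_hasDerivAt_eq_slope p p' hTt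
    (fun x _ => (hp x).continuousAt.continuousWithinAt) fun x _ => hp x
  have h1 : 1 ≤ (p t - p T) / (t - T) := hslope ▸ hT ξ hξ.1.le
  rw [le_div_iff₀ (sub_pos.2 hTt)] at h1
  have := hK (mem_range_self t)
  linarith [le_abs_self (K - p T)]

/-- Once `a v > B`, `v - B / a` grows exponentially and drags `p` to `+∞`. -/
theorem mul_le_of_bddAbove_of_le_deriv {a B D : ℝ} (ha : 0 < a) {v v' p p' : ℝ → ℝ}
    (hv : ∀ t, HasDerivAt v (v' t) t) (hv' : ∀ t, a * v t - B ≤ v' t)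
    (hp : ∀ t, HasDerivAt p (p' t) t) (hp' : ∀ t, v t - D ≤ p' t) (hpb : BddAbove (range p))
    (t : ℝ) : a * v t ≤ B := by
  by_contra! hvt
  have hu : Tendsto (fun x => v x - B / a) atTop atTop := by
    refine tendsto_atTop_of_mul_le_deriv ha (fun x => (hv x).sub_const (B / a)) (fun x => ?_)
      (s := t) ?_
    · rw [mul_sub, mul_div_cancel₀ _ ha.ne']; exact hv' x
    · rw [sub_pos, div_lt_iff₀ ha]; linarith
  have hp'_top : Tendsto p' atTop atTop :=
    tendsto_atTop_mono (fun x => by linarith [hp' x])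
      (tendsto_atTop_add_const_right _ (B / a - D) hu)
  exact not_bddAbove_range_of_tendsto_deriv_atTop hp hp'_top hpb

theorem mul_abs_le_of_isBounded_of_abs_deriv_sub_le {a B D : ℝ} (ha : 0 < a) {v v' p p' : ℝ → ℝ}
    (hv : ∀ t, HasDerivAt v (v' t) t) (hv' : ∀ t, |v' t - a * v t| ≤ B)
    (hp : ∀ t, HasDerivAt p (p' t) t) (hp' : ∀ t, |p' t - v t| ≤ D)
    (hpb : Bornology.IsBounded (range p)) (t : ℝ) : a * |v t| ≤ B := by
  rw [isBounded_iff_bddBelow_bddAbove] at hpb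
  rw [← abs_of_pos ha, ← abs_mul, abs_le, neg_le]
  constructor
  · have hpb' : BddAbove (range fun x => -p x) := by
      obtain ⟨m, hm⟩ := hpb.1
      exact ⟨-m, by rintro _ ⟨x, rfl⟩; exact neg_le_neg (hm (mem_range_self x))⟩
    have := mul_le_of_bddAbove_of_le_deriv (B := B) (D := D) (v := fun x => -v x) ha
      (fun x => (hv x).neg) (fun x => by linarith [(abs_le.1 (hv' x)).2]) (fun x => (hp x).neg)
      (fun x => by linarith [(abs_le.1 (hp' x)).2]) hpb' t
    linarith
  · exact mul_le_of_bddAbove_of_le_deriv (D := D) ha hv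
      (fun x => by linarith [(abs_le.1 (hv' x)).1]) hp
      (fun x => by linarith [(abs_le.1 (hp' x)).1]) hpb.2 t

section SecondOrder

variable {c z₁ z₂ κ M : ℝ} {φ φ' g : ℝ → ℝ}

/-- `v = φ' - z₁ φ` solves `v' = z₂ v - (φ + g)`, unstable forward in time. -/
theorem mul_abs_deriv_sub_mul_le (hz₂ : 0 < z₂) (hsum : z₁ + z₂ = c) (hprod : z₁ * z₂ = -1)
    (hφ : ∀ t, HasDerivAt φ (φ' t) t) (hφ' : ∀ t, HasDerivAt φ' (c * φ' t - g t) t)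
    (hφb : ∀ t, |φ t| ≤ κ) (hg : ∀ t, |g t| ≤ M) (t : ℝ) : z₂ * |φ' t - z₁ * φ t| ≤ κ + M := by
  refine mul_abs_le_of_isBounded_of_abs_deriv_sub_le (D := |z₁| * κ)
    (v := fun x => φ' x - z₁ * φ x) hz₂
    (fun x => (hφ' x).sub ((hφ x).const_mul z₁)) (fun x => ?_) hφ (fun x => ?_)
    (isBounded_iff_forall_norm_le.2 ⟨κ, forall_mem_range.2 hφb⟩) t
  · have hode : c * φ' x - g x - z₁ * φ' x - z₂ * (φ' x - z₁ * φ x) = -(φ x + g x) := by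
      rw [← hsum]; linear_combination φ x * hprod
    rw [hode, abs_neg]
    exact (abs_add_le _ _).trans (add_le_add (hφb x) (hg x))
  · rw [sub_sub_cancel, abs_mul]
    exact mul_le_mul_of_nonneg_left (hφb x) (abs_nonneg z₁)

/-- The time reversal `t ↦ φ (-t)` solves the equation with `c` replaced by `-c`, whose roots are
`-z₂ < 0 < -z₁`. -/
theorem neg_mul_abs_deriv_sub_mul_le (hz₁ : z₁ < 0) (hsum : z₁ + z₂ = c) (hprod : z₁ * z₂ = -1)
    (hφ : ∀ t, HasDerivAt φ (φ' t) t) (hφ' : ∀ t, HasDerivAt φ' (c * φ' t - g t) t)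
    (hφb : ∀ t, |φ t| ≤ κ) (hg : ∀ t, |g t| ≤ M) (t : ℝ) : -z₁ * |φ' t - z₂ * φ t| ≤ κ + M := by
  have := mul_abs_deriv_sub_mul_le (c := -c) (z₁ := -z₂) (z₂ := -z₁) (φ := fun x => φ (-x))
    (φ' := fun x => -φ' (-x)) (g := fun x => g (-x)) (neg_pos.2 hz₁) (by linarith)
    (by linarith) (fun x => ?_) (fun x => ?_) (fun x => hφb (-x)) (fun x => hg (-x)) (-t)
  · have hrev : |-φ' (-(-t)) - -z₂ * φ (-(-t))| = |φ' t - z₂ * φ t| := by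
      rw [neg_neg, ← abs_neg]; ring_nf
    rwa [hrev] at this
  · exact ((hφ (-x)).comp x (hasDerivAt_neg x)).congr_deriv (mul_neg_one _)
  · exact ((hφ' (-x)).comp x (hasDerivAt_neg x)).neg.congr_deriv (by ring)

theorem exists_roots_neg_pos (c : ℝ) :
    ∃ z₁ z₂ : ℝ, z₁ < 0 ∧ 0 < z₂ ∧ z₁ + z₂ = c ∧ z₁ * z₂ = -1 := by
  have hs : √(c ^ 2 + 4) ^ 2 = c ^ 2 + 4 := sq_sqrt (by positivity)
  have hcs : |c| < √(c ^ 2 + 4) := by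
    rw [← sqrt_sq_eq_abs]; exact sqrt_lt_sqrt (sq_nonneg c) (by linarith)
  refine ⟨(c - √(c ^ 2 + 4)) / 2, (c + √(c ^ 2 + 4)) / 2, ?_, ?_, by ring, ?_⟩
  · linarith [le_abs_self c]
  · linarith [neg_abs_le c]
  · linear_combination (-1 / 4 : ℝ) * hs

theorem abs_deriv_le_of_abs_le (hφ : ∀ t, HasDerivAt φ (φ' t) t)
    (hφ' : ∀ t, HasDerivAt φ' (c * φ' t - g t) t) (hφb : ∀ t, |φ t| ≤ κ) (hg : ∀ t, |g t| ≤ M)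
    (t : ℝ) : |φ' t| ≤ κ + M := by
  obtain ⟨z₁, z₂, hz₁, hz₂, hsum, hprod⟩ := exists_roots_neg_pos c
  have hv := mul_abs_deriv_sub_mul_le hz₂ hsum hprod hφ hφ' hφb hg t
  have hw := neg_mul_abs_deriv_sub_mul_le hz₁ hsum hprod hφ hφ' hφb hg t
  -- `(z₂ - z₁)² = c² + 4 ≥ 4`
  have hgap : 2 ≤ z₂ - z₁ := by nlinarith [sq_nonneg (z₁ + z₂)]
  have hsplit : (z₂ - z₁) * |φ' t| ≤ z₂ * |φ' t - z₁ * φ t| + -z₁ * |φ' t - z₂ * φ t| :=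
    calc (z₂ - z₁) * |φ' t| = |z₂ * (φ' t - z₁ * φ t) + -z₁ * (φ' t - z₂ * φ t)| := by
          rw [← abs_of_pos (by linarith : 0 < z₂ - z₁), ← abs_mul]; ring_nf
      _ ≤ |z₂ * (φ' t - z₁ * φ t)| + |-z₁ * (φ' t - z₂ * φ t)| := abs_add_le _ _
      _ = _ := by rw [abs_mul, abs_mul, abs_of_pos hz₂, abs_of_pos (neg_pos.2 hz₁)]
  nlinarith [abs_nonneg (φ' t)]

end SecondOrder

theorem stmt_14_general (c r κ M : ℝ)
    (f : ℝ → ℝ → ℝ)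
    (hM : ∀ x ∈ Icc 0 κ, ∀ y ∈ Icc 0 κ, |f x y| ≤ M)
    (φ : ℝ → ℝ) (hφ : ContDiff ℝ 2 φ) (hb : ∀ t, φ t ∈ Icc 0 κ)
    (heq : ∀ t, deriv (deriv φ) t - c * deriv φ t + f (φ t) (φ (t - r)) = 0) :
    ∀ t, |deriv φ t| ≤ κ + M := by
  have hφ₁ : Differentiable ℝ φ := hφ.differentiable two_ne_zero
  have hφ₂ : Differentiable ℝ (deriv φ) := hφ.differentiable_deriv_two
  exact abs_deriv_le_of_abs_le (c := c) (g := fun t => f (φ t) (φ (t - r)))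
    (fun t => (hφ₁ t).hasDerivAt) (fun t => (hφ₂ t).hasDerivAt.congr_deriv (by linarith [heq t]))
    (fun t => (abs_of_nonneg (hb t).1).trans_le (hb t).2) (fun t => hM _ (hb t) _ (hb (t - r)))

/-- Uniform derivative bound `|φ'| ≤ κ + max |f|` for bounded profiles. -/
theorem stmt_14 (c r κ M : ℝ) (hc : 0 < c) (hr : 0 ≤ r) (hκ : 0 < κ)
    (f : ℝ → ℝ → ℝ) (hfc : Continuous fun p : ℝ × ℝ => f p.1 p.2)
    (hM : ∀ x ∈ Icc 0 κ, ∀ y ∈ Icc 0 κ, |f x y| ≤ M)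
    (φ : ℝ → ℝ) (hφ : ContDiff ℝ 2 φ) (hb : ∀ t, φ t ∈ Icc 0 κ)
    (heq : ∀ t, deriv (deriv φ) t - c * deriv φ t + f (φ t) (φ (t - r)) = 0) :
    ∀ t, |deriv φ t| ≤ κ + M :=
  stmt_14_general c r κ M f hM φ hφ hb heq
end

section
/- Let F(λ) = ελ² − λ + α + βe^{−hλ} with ε > 0, h > 0, α + β < 0, β < 0, and suppose F has exactly three real roots λ₁ ≤ λ₂ < 0 < λ₃ (counting multiplicity) and the greatest negative root λ₂ satisfies F'(λ₂) ≤ 0. If z = λ₂ + iθ with θ > 0 is also a root of F (extended to ℂ), then taking the imaginary part yields θ(2ελ₂ − 1 + h|β|e^{−hλ₂} sin(hθ)/(hθ)) = 0, which is impossible since sin(x)/x < 1 for x > 0 and 2ελ₂ − 1 + h|β|e^{−hλ₂} ≤ 0. Hence F has no complex root with real part equal to λ₂ and nonzero imaginary part. -/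
open Real Complex

/-! Only the imaginary part of `F(λ₂ + iθ) = 0` is needed: multiplied by `θ` it reads
`θ² (2ελ₂ - 1) + |β| e^{-hλ₂} θ sin (hθ) = 0`, while `θ sin (hθ) < hθ²` for `θ ≠ 0` makes the
left-hand side strictly smaller than `θ² F'(λ₂) ≤ 0`. -/

theorem Real.mul_sin_mul_lt_mul_sq {h θ : ℝ} (hh : 0 < h) (hθ : θ ≠ 0) :
    θ * Real.sin (h * θ) < h * θ ^ 2 := by
  rcases hθ.lt_or_gt with hneg | hpos
  · have hsin : Real.sin (h * -θ) < h * -θ := Real.sin_lt (mul_pos hh (neg_pos.mpr hneg))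
    rw [mul_neg, Real.sin_neg] at hsin
    nlinarith
  · have hsin : Real.sin (h * θ) < h * θ := Real.sin_lt (mul_pos hh hpos)
    nlinarith

theorem im_quadratic_add_exp (ε h α β x θ : ℝ) :
    ((ε : ℂ) * (x + θ * I) ^ 2 - (x + θ * I) + (α : ℂ)
        + (β : ℂ) * Complex.exp (-(h : ℂ) * (x + θ * I))).im
      = θ * (2 * ε * x - 1) - β * Real.exp (-h * x) * Real.sin (h * θ) := by
  have hexp : -(h : ℂ) * (x + θ * I) = ((-h * x : ℝ) : ℂ) + ((-(h * θ) : ℝ) : ℂ) * I := by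
    push_cast; ring
  rw [hexp, Complex.exp_add_mul_I, ← Complex.ofReal_exp, ← Complex.ofReal_cos,
    ← Complex.ofReal_sin]
  simp only [add_im, sub_im, mul_im, mul_re, ofReal_re, ofReal_im, I_re, I_im, sq, add_re]
  rw [Real.sin_neg]
  ring

theorem stmt_18_general (ε h α β lam₂ : ℝ) (hh : 0 < h) (hβ : β < 0)
    (hder : 2 * ε * lam₂ - 1 + h * |β| * Real.exp (-h * lam₂) ≤ 0) :
    ∀ θ : ℝ, θ ≠ 0 →
      (ε : ℂ) * (lam₂ + θ * Complex.I) ^ 2 - (lam₂ + θ * Complex.I) + (α : ℂ)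
        + (β : ℂ) * Complex.exp (-(h : ℂ) * (lam₂ + θ * Complex.I)) ≠ 0 := by
  intro θ hθ hroot
  have him : θ * (2 * ε * lam₂ - 1) + |β| * Real.exp (-h * lam₂) * Real.sin (h * θ) = 0 := by
    have := congrArg Complex.im hroot
    rw [im_quadratic_add_exp, zero_im] at this
    rw [abs_of_neg hβ]
    linarith
  have hcoeff : 0 < |β| * Real.exp (-h * lam₂) := mul_pos (abs_pos.mpr hβ.ne) (Real.exp_pos _)
  have : (0 : ℝ) < 0 := calc
    0 = θ * (θ * (2 * ε * lam₂ - 1) + |β| * Real.exp (-h * lam₂) * Real.sin (h * θ)) := by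
        rw [him, mul_zero]
    _ = θ ^ 2 * (2 * ε * lam₂ - 1) + |β| * Real.exp (-h * lam₂) * (θ * Real.sin (h * θ)) := by
        ring
    _ < θ ^ 2 * (2 * ε * lam₂ - 1) + |β| * Real.exp (-h * lam₂) * (h * θ ^ 2) := by
        gcongr ?_ + _ * ?_
        exact Real.mul_sin_mul_lt_mul_sq hh hθ
    _ = θ ^ 2 * (2 * ε * lam₂ - 1 + h * |β| * Real.exp (-h * lam₂)) := by ring
    _ ≤ 0 := mul_nonpos_of_nonneg_of_nonpos (sq_nonneg θ) hder
  exact lt_irrefl 0 this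

/-- If `λ₂ < 0` is a real root of `F` with `F'(λ₂) ≤ 0`, then `F` (extended to `ℂ`)
has no root of the form `λ₂ + iθ` with `θ ≠ 0`. -/
theorem stmt_18 (ε h α β lam₂ : ℝ) (hε : 0 < ε) (hh : 0 < h) (hβ : β < 0)
    (hαβ : α + β < 0) (hlam : lam₂ < 0)
    (hroot : ε * lam₂ ^ 2 - lam₂ + α + β * Real.exp (-h * lam₂) = 0)
    (hder : 2 * ε * lam₂ - 1 + h * |β| * Real.exp (-h * lam₂) ≤ 0) :
    ∀ θ : ℝ, θ ≠ 0 →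
      (ε : ℂ) * (lam₂ + θ * Complex.I) ^ 2 - (lam₂ + θ * Complex.I) + (α : ℂ)
        + (β : ℂ) * Complex.exp (-(h : ℂ) * (lam₂ + θ * Complex.I)) ≠ 0 :=
  stmt_18_general ε h α β lam₂ hh hβ hder
end

section
/- Let λ(h) < 0 and ε₀(h) > 0 solve the system ελ² − λ + α = −βe^{−hλ}, 2ελ − 1 = hβe^{−hλ} (double-root conditions for F), with β < 0. Then ε₀'(h) = βe^{−λh}/λ > 0; consequently c(h) := ε₀(h)^{−1/2} is strictly decreasing in h on the interval where it is defined. -/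
/-!
Differentiate the identity `F(ε₀(h), λ(h), h) = 0` along the branch, where
`F(ε, λ, h) = ελ² − λ + α + βe^{−hλ}`. The chain rule gives
`λ² ε₀' + (∂F/∂λ) λ' + ∂F/∂h = 0`; the double-root condition is exactly `∂F/∂λ = 0`, so the
unknown `λ'` drops out and `λ² ε₀' = −∂F/∂h = λβe^{−hλ}`. For `β < 0` and `λ < 0` this is
positive, so `ε₀` is strictly increasing and `ε₀^{−1/2}` strictly decreasing.
-/

open Real Set Filter Topology

noncomputable def charFun (α β ε l h : ℝ) : ℝ := ε * l ^ 2 - l + α + β * exp (-h * l)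

theorem hasDerivAt_charFun_comp {α β : ℝ} {ε lam : ℝ → ℝ} {e' l' x : ℝ}
    (hε : HasDerivAt ε e' x) (hlam : HasDerivAt lam l' x) :
    HasDerivAt (fun y => charFun α β (ε y) (lam y) y)
      (lam x ^ 2 * e' + (2 * ε x * lam x - 1 - x * β * exp (-x * lam x)) * l'
        - lam x * β * exp (-x * lam x)) x := by
  have hexp : HasDerivAt (fun y => β * exp (-y * lam y))
      (β * (exp (-x * lam x) * (-1 * lam x + -x * l'))) x :=
    (((hasDerivAt_id x).neg.mul hlam).exp).const_mul β
  have hsum := (((hε.mul (hlam.pow 2)).sub hlam).add_const α).add hexp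
  refine hsum.congr_deriv ?_
  simp only [Pi.pow_apply, Nat.cast_ofNat]
  ring

theorem HasDerivAt.eq_div_of_charFun_doubleRoot {α β : ℝ} {ε lam : ℝ → ℝ} {e' l' x : ℝ}
    (hε : HasDerivAt ε e' x) (hlam : HasDerivAt lam l' x) (hlam0 : lam x ≠ 0)
    (hF : ∀ᶠ y in 𝓝 x, charFun α β (ε y) (lam y) y = 0)
    (hdouble : 2 * ε x * lam x - 1 = x * β * Real.exp (-x * lam x)) :
    e' = β * Real.exp (-x * lam x) / lam x := by
  have hzero : HasDerivAt (fun y => charFun α β (ε y) (lam y) y) 0 x :=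
    (hasDerivAt_const x (0 : ℝ)).congr_of_eventuallyEq hF
  have hchain := (hasDerivAt_charFun_comp (α := α) (β := β) hε hlam).unique hzero
  rw [eq_div_iff hlam0]
  apply mul_right_cancel₀ hlam0
  linear_combination hchain - l' * hdouble

theorem StrictMonoOn.rpow_strictAntiOn_of_exponent_neg {s : Set ℝ} {f : ℝ → ℝ} {r : ℝ}
    (hf : StrictMonoOn f s) (hpos : ∀ x ∈ s, 0 < f x) (hr : r < 0) :
    StrictAntiOn (fun x => f x ^ r) s :=
  (strictAntiOn_rpow_Ioi_of_exponent_neg hr).comp_strictMonoOn hf fun x hx => hpos x hx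

theorem stmt_19_general (α β a b : ℝ) (hβ : β < 0)
    (lam ε₀ : ℝ → ℝ)
    (hlamd : ∀ x ∈ Ioo a b, DifferentiableAt ℝ lam x)
    (hεd : ∀ x ∈ Ioo a b, DifferentiableAt ℝ ε₀ x)
    (hlamneg : ∀ x ∈ Ioo a b, lam x < 0)
    (hεpos : ∀ x ∈ Ioo a b, 0 < ε₀ x)
    (heq1 : ∀ x ∈ Ioo a b,
      ε₀ x * (lam x) ^ 2 - lam x + α + β * Real.exp (-x * lam x) = 0)
    (heq2 : ∀ x ∈ Ioo a b,
      2 * ε₀ x * lam x - 1 = x * β * Real.exp (-x * lam x)) :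
    (∀ x ∈ Ioo a b,
      deriv ε₀ x = β * Real.exp (-x * lam x) / lam x ∧ 0 < deriv ε₀ x) ∧
    StrictAntiOn (fun x => (ε₀ x) ^ (-(1 : ℝ) / 2)) (Ioo a b) := by
  have hderiv : ∀ x ∈ Ioo a b,
      deriv ε₀ x = β * Real.exp (-x * lam x) / lam x ∧ 0 < deriv ε₀ x := by
    intro x hx
    have hformula : deriv ε₀ x = β * exp (-x * lam x) / lam x :=
      (hεd x hx).hasDerivAt.eq_div_of_charFun_doubleRoot (hlamd x hx).hasDerivAt (hlamneg x hx).ne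
        (eventually_of_mem (isOpen_Ioo.mem_nhds hx) heq1) (heq2 x hx)
    refine ⟨hformula, ?_⟩
    rw [hformula]
    exact div_pos_of_neg_of_neg (mul_neg_of_neg_of_pos hβ (exp_pos _)) (hlamneg x hx)
  refine ⟨hderiv, StrictMonoOn.rpow_strictAntiOn_of_exponent_neg ?_ hεpos (by norm_num)⟩
  refine strictMonoOn_of_deriv_pos (convex_Ioo a b)
    (fun x hx => (hεd x hx).continuousAt.continuousWithinAt) fun x hx => ?_
  rw [interior_Ioo] at hx
  exact (hderiv x hx).2

/-- Along the double-root branch, `ε₀'(h) = β e^{−hλ(h)}/λ(h) > 0`; hence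
`c(h) = ε₀(h)^{−1/2}` is strictly decreasing. -/
theorem stmt_19 (α β a b : ℝ) (hβ : β < 0) (hab : a < b)
    (lam ε₀ : ℝ → ℝ)
    (hlamd : ∀ x ∈ Ioo a b, DifferentiableAt ℝ lam x)
    (hεd : ∀ x ∈ Ioo a b, DifferentiableAt ℝ ε₀ x)
    (hlamneg : ∀ x ∈ Ioo a b, lam x < 0)
    (hεpos : ∀ x ∈ Ioo a b, 0 < ε₀ x)
    (heq1 : ∀ x ∈ Ioo a b,
      ε₀ x * (lam x) ^ 2 - lam x + α + β * Real.exp (-x * lam x) = 0)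
    (heq2 : ∀ x ∈ Ioo a b,
      2 * ε₀ x * lam x - 1 = x * β * Real.exp (-x * lam x)) :
    (∀ x ∈ Ioo a b,
      deriv ε₀ x = β * Real.exp (-x * lam x) / lam x ∧ 0 < deriv ε₀ x) ∧
    StrictAntiOn (fun x => (ε₀ x) ^ (-(1 : ℝ) / 2)) (Ioo a b) :=
  stmt_19_general α β a b hβ lam ε₀ hlamd hεd hlamneg hεpos heq1 heq2
end
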